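/- For all non-negative integers n and m, the function t ↦ H_{n,m}(t) is convex on the interval [-n, n]. -/

import Mathlib

open MeasureTheory Filter

/-- `Ib n m = Σ_{z=0}^{n} ((1 + (-1)^{n-z}) / 2^m) · m!/(z!(m-z)!)`, empty sum for `n < 0`. -/
noncomputable def Ib (n : ℤ) (m : ℕ) : ℝ :=
  ∑ z ∈ Finset.range (n + 1).toNat,
    ((1 + (-1 : ℝ) ^ (n.toNat - z)) / 2 ^ m) * (m.choose z)

/-- The function `G(x, y, m)` of the paper. -/
noncomputable def Gfun (x y m : ℕ) : ℝ :=
  if x = 0 ∧ y = 0 then 1 else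
    ∑ n ∈ Finset.range (m / (2 * (x + y)) + 1),
      (2 * Ib (((m : ℤ) - x) / 2 - ((x : ℤ) + y) * n) (2 * (((m : ℤ) - x) / 2) + x + 2).toNat
       - 2 * Ib (((m : ℤ) - x) / 2 - y - ((x : ℤ) + y) * n) (2 * (((m : ℤ) - x) / 2) + x + 2).toNat
       + 2 * Ib (((m : ℤ) - y) / 2 - ((x : ℤ) + y) * n) (2 * (((m : ℤ) - y) / 2) + y + 2).toNat
       - 2 * Ib (((m : ℤ) - y) / 2 - x - ((x : ℤ) + y) * n) (2 * (((m : ℤ) - y) / 2) + y + 2).toNat)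

/-- The piecewise-linear interpolation `H_{n,m}(t)` of the paper. -/
noncomputable def Hfun (n m : ℕ) (t : ℝ) : ℝ :=
  if (n : ℝ) ≤ |t| then 1 else
    (1 - ((n : ℝ) + t) / 2 + (⌊((n : ℝ) + t) / 2⌋ : ℤ))
        * Gfun (⌊((n : ℝ) + t) / 2⌋).toNat (n - (⌊((n : ℝ) + t) / 2⌋).toNat) m
    + (((n : ℝ) + t) / 2 - (⌊((n : ℝ) + t) / 2⌋ : ℤ))
        * Gfun ((⌊((n : ℝ) + t) / 2⌋).toNat + 1) (n - (⌊((n : ℝ) + t) / 2⌋).toNat - 1) m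

/-!
Pascal's rule for the binomial sums `Ib` gives `G(0, y, m) = G(x, 0, m) = 1`,
`G(x + 1, y + 1, 0) = 0` and `2 G(x + 1, y + 1, m + 1) = G(x, y + 2, m) + G(x + 2, y, m)`, so
`G(x, y, m)` is the probability that a simple random walk started at `x` leaves `(0, x + y)`
within `m` steps. Induction on `m` along this recursion shows that `z ↦ G(z, n - z, m)` is a
convex sequence on `{0, …, n}`, and `H_{n,m}(t)` is its piecewise-linear interpolation at
`(n + t) / 2`, which is convex because every secant line of a convex sequence lies below the
interpolation.
-/

open Finset

noncomputable def parityChooseSum (k M : ℕ) : ℝ :=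
  ∑ z ∈ range (k + 1), (1 + (-1 : ℝ) ^ (k - z)) * M.choose z

lemma Ib_of_neg {n : ℤ} (hn : n < 0) (M : ℕ) : Ib n M = 0 := by
  simp [Ib, show (n + 1).toNat = 0 by omega]

lemma Ib_natCast (k M : ℕ) : Ib k M = parityChooseSum k M / 2 ^ M := by
  rw [Ib, parityChooseSum, show ((k : ℤ) + 1).toNat = k + 1 by omega, Int.toNat_natCast, sum_div]
  exact sum_congr rfl fun z _ => by ring

lemma parityChooseSum_zero (M : ℕ) : parityChooseSum 0 M = 2 := by
  norm_num [parityChooseSum]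

lemma parityChooseSum_succ_succ (k M : ℕ) :
    parityChooseSum (k + 1) (M + 1) = parityChooseSum (k + 1) M + parityChooseSum k M := by
  simp only [parityChooseSum, sum_range_succ' _ (k + 1), Nat.add_sub_add_right,
    Nat.choose_succ_succ', Nat.choose_zero_right, Nat.cast_add, mul_add, sum_add_distrib]
  ring

lemma parityChooseSum_succ_add (k M : ℕ) :
    parityChooseSum (k + 1) M + parityChooseSum k M =
      2 * ∑ z ∈ range (k + 2), (M.choose z : ℝ) := by
  rw [parityChooseSum, sum_range_succ _ (k + 1), parityChooseSum, add_right_comm,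
    ← sum_add_distrib, sum_range_succ _ (k + 1), mul_add, mul_sum]
  congr 1
  · refine sum_congr rfl fun z hz => ?_
    rw [show k + 1 - z = k - z + 1 by grind, pow_succ]
    ring
  · norm_num

lemma Ib_pascal (n : ℤ) (M : ℕ) : 2 * Ib n (M + 1) = Ib n M + Ib (n - 1) M := by
  rcases lt_or_ge n 0 with hn | hn
  · simp [Ib_of_neg hn, Ib_of_neg (show n - 1 < 0 by omega)]
  lift n to ℕ using hn
  cases n with
  | zero =>
    rw [Ib_natCast, Ib_natCast, Ib_of_neg (by norm_num), parityChooseSum_zero,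
      parityChooseSum_zero, pow_succ]
    field_simp
    ring
  | succ k =>
    rw [show ((k + 1 : ℕ) : ℤ) - 1 = k by push_cast; ring, Ib_natCast, Ib_natCast, Ib_natCast,
      parityChooseSum_succ_succ, pow_succ]
    field_simp

lemma Ib_add_Ib_sub_one (k M : ℕ) :
    Ib k M + Ib (k - 1) M = 2 * (∑ z ∈ range (k + 1), (M.choose z : ℝ)) / 2 ^ M := by
  cases k with
  | zero => rw [Ib_natCast, Ib_of_neg (by norm_num), parityChooseSum_zero]; simp
  | succ k =>
    rw [show ((k + 1 : ℕ) : ℤ) - 1 = k by push_cast; ring, Ib_natCast, Ib_natCast, ← add_div,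
      parityChooseSum_succ_add]

lemma Ib_half (a : ℕ) : Ib a (2 * a + 2) = 1 / 2 := by
  -- Pascal's rule turns the alternate-term sum into the half row `∑_{z ≤ a} C(2a+1, z) = 4^a`.
  have h := Ib_pascal a (2 * a + 1)
  rw [Ib_add_Ib_sub_one, ← Nat.cast_sum, Nat.sum_range_choose_halfway, pow_succ, pow_mul] at h
  norm_num at h
  field_simp at h
  linarith

noncomputable def Gpart (x y m n : ℕ) : ℝ :=
  2 * Ib (((m : ℤ) - x) / 2 - ((x : ℤ) + y) * n) (2 * (((m : ℤ) - x) / 2) + x + 2).toNat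
    - 2 * Ib (((m : ℤ) - x) / 2 - y - ((x : ℤ) + y) * n)
        (2 * (((m : ℤ) - x) / 2) + x + 2).toNat

lemma Gfun_eq_sum_Gpart {x y : ℕ} (h : ¬(x = 0 ∧ y = 0)) (m : ℕ) :
    Gfun x y m = ∑ n ∈ range (m / (2 * (x + y)) + 1), (Gpart x y m n + Gpart y x m n) := by
  rw [Gfun, if_neg h]
  refine sum_congr rfl fun n _ => ?_
  rw [Gpart, Gpart, add_comm (y : ℤ)]
  ring

lemma Gpart_eq_zero {x y m n : ℕ} (h : ((m : ℤ) - x) / 2 < ((x : ℤ) + y) * n) :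
    Gpart x y m n = 0 := by
  rw [Gpart, Ib_of_neg (by omega), Ib_of_neg (by omega)]
  ring

lemma Gfun_eq_sum_range {x y : ℕ} (h : ¬(x = 0 ∧ y = 0)) {m K : ℕ}
    (hK : m / (2 * (x + y)) < K) :
    Gfun x y m = ∑ n ∈ range K, (Gpart x y m n + Gpart y x m n) := by
  rw [Gfun_eq_sum_Gpart h]
  refine sum_subset (range_subset_range.2 hK) fun n _ hn => ?_
  have hm : m < 2 * ((x + y) * n) := by
    rw [mem_range, not_lt, Nat.succ_le_iff, Nat.div_lt_iff_lt_mul (by omega)] at hn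
    linarith
  have hm' : (m : ℤ) < 2 * (((x : ℤ) + y) * n) := by exact_mod_cast hm
  rw [Gpart_eq_zero (by omega), Gpart_eq_zero (by rw [add_comm (y : ℤ)]; omega), add_zero]

lemma Gfun_comm (x y m : ℕ) : Gfun x y m = Gfun y x m := by
  by_cases h : x = 0 ∧ y = 0
  · rw [h.1, h.2]
  have hlt (a b : ℕ) : m / (2 * (a + b)) < m + 1 := Nat.lt_succ_of_le (Nat.div_le_self _ _)
  rw [Gfun_eq_sum_range h (hlt x y), Gfun_eq_sum_range (by omega) (hlt y x)]
  exact sum_congr rfl fun n _ => add_comm _ _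

lemma Gpart_succ (x y m n : ℕ) :
    2 * Gpart (x + 1) (y + 1) (m + 1) n = Gpart x (y + 2) m n + Gpart (x + 2) y m n := by
  unfold Gpart
  push_cast
  set a := ((m : ℤ) - x) / 2
  set M := (2 * a + x + 2).toNat
  set c := a - ((x : ℤ) + y + 2) * n
  rw [show ((m : ℤ) + 1 - (x + 1)) / 2 = a by omega,
    show ((m : ℤ) - (x + 2)) / 2 = a - 1 by omega,
    show (2 * a + (x + 1) + 2).toNat = M + 1 by omega,
    show (2 * (a - 1) + (x + 2) + 2).toNat = M by omega,
    show a - (x + 1 + (y + 1)) * n = c by ring,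
    show a - (y + 1) - (x + 1 + (y + 1)) * n = c - y - 1 by ring,
    show a - (x + (y + 2)) * n = c by ring,
    show a - (y + 2) - (x + (y + 2)) * n = c - y - 1 - 1 by ring,
    show a - 1 - (x + 2 + y) * n = c - 1 by ring,
    show a - 1 - y - (x + 2 + y) * n = c - y - 1 by ring]
  linarith [Ib_pascal c M, Ib_pascal (c - y - 1) M]

lemma Gfun_succ (x y m : ℕ) :
    2 * Gfun (x + 1) (y + 1) (m + 1) = Gfun x (y + 2) m + Gfun (x + 2) y m := by
  have hlt (a b k : ℕ) (hk : k ≤ m + 1) : k / (2 * (a + b)) < m + 2 :=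
    Nat.lt_succ_of_le ((Nat.div_le_self _ _).trans hk)
  rw [Gfun_eq_sum_range (by omega) (hlt _ _ _ le_rfl),
    Gfun_eq_sum_range (by omega) (hlt _ _ m (by omega)),
    Gfun_eq_sum_range (by omega) (hlt _ _ m (by omega)), mul_sum, ← sum_add_distrib]
  exact sum_congr rfl fun n _ => by linarith [Gpart_succ x y m n, Gpart_succ y x m n]

lemma Gpart_zero_right (x m n : ℕ) : Gpart x 0 m n = 0 := by
  simp [Gpart]

lemma sum_Gpart_zero_left {y m K : ℕ} (hy : 0 < y) (hK : m / (2 * y) < K) :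
    ∑ n ∈ range K, Gpart 0 y m n = 1 := by
  set f : ℕ → ℝ := fun k => 2 * Ib ((m : ℤ) / 2 - y * k) (2 * (m / 2) + 2)
  have hterm (n : ℕ) : Gpart 0 y m n = f n - f (n + 1) := by
    simp only [Gpart, f, Nat.cast_zero, sub_zero, zero_add, add_zero]
    push_cast
    rw [show (2 * ((m : ℤ) / 2) + 2).toNat = 2 * (m / 2) + 2 by omega,
      show (m : ℤ) / 2 - y - y * n = m / 2 - y * (n + 1) by ring]
  have hfK : f K = 0 := by
    have hm : m < 2 * (y * K) := by
      rw [Nat.div_lt_iff_lt_mul (by omega)] at hK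
      linarith
    have hm' : (m : ℤ) < 2 * (y * K) := by exact_mod_cast hm
    simp only [f, Ib_of_neg (show (m : ℤ) / 2 - y * K < 0 by omega), mul_zero]
  have hf0 : f 0 = 1 := by
    simp only [f, Nat.cast_zero, mul_zero, sub_zero]
    rw [show (m : ℤ) / 2 = ((m / 2 : ℕ) : ℤ) by omega, Ib_half]
    norm_num
  rw [sum_congr rfl fun n _ => hterm n, sum_range_sub', hfK, hf0, sub_zero]

lemma Gfun_zero_left (y m : ℕ) : Gfun 0 y m = 1 := by
  rcases Nat.eq_zero_or_pos y with rfl | hy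
  · simp [Gfun]
  rw [Gfun_eq_sum_range (by omega) (Nat.lt_succ_self _), sum_add_distrib,
    sum_Gpart_zero_left hy (by simp)]
  simp [Gpart_zero_right]

lemma Gfun_zero_right (x m : ℕ) : Gfun x 0 m = 1 := by
  rw [Gfun_comm, Gfun_zero_left]

lemma Gfun_succ_succ_zero (x y : ℕ) : Gfun (x + 1) (y + 1) 0 = 0 := by
  rw [Gfun_eq_sum_range (by omega) (K := 1) (by simp), sum_range_one,
    Gpart_eq_zero (by push_cast; omega), Gpart_eq_zero (by push_cast; omega), add_zero]

theorem absorbing_walk_induction {P : ℕ → ℕ → ℕ → Prop} (left : ∀ y m, P 0 y m)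
    (right : ∀ x m, P x 0 m) (base : ∀ x y, P (x + 1) (y + 1) 0)
    (step : ∀ x y m, P x (y + 2) m → P (x + 2) y m → P (x + 1) (y + 1) (m + 1)) :
    ∀ x y m, P x y m := by
  intro x y m
  induction m generalizing x y with
  | zero => rcases x with _ | x <;> rcases y with _ | y <;> simp_all
  | succ m ih => rcases x with _ | x <;> rcases y with _ | y <;> simp_all

lemma Gfun_nonneg : ∀ x y m, 0 ≤ Gfun x y m :=
  absorbing_walk_induction (fun y m => by simp [Gfun_zero_left])
    (fun x m => by simp [Gfun_zero_right])
    (fun x y => (Gfun_succ_succ_zero x y).ge)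
    (fun x y m h₁ h₂ => by linarith [Gfun_succ x y m])

lemma Gfun_le_succ : ∀ x y m, Gfun x y m ≤ Gfun x y (m + 1) :=
  absorbing_walk_induction (fun y m => by simp [Gfun_zero_left])
    (fun x m => by simp [Gfun_zero_right])
    (fun x y => (Gfun_succ_succ_zero x y).trans_le (Gfun_nonneg _ _ _))
    (fun x y m h₁ h₂ => by linarith [Gfun_succ x y m, Gfun_succ x y (m + 1)])

lemma two_mul_Gfun_one_le (y m : ℕ) : 2 * Gfun 1 (y + 1) m ≤ Gfun 0 (y + 2) m + Gfun 2 y m := by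
  cases m with
  | zero => rw [Gfun_succ_succ_zero, Gfun_zero_left]; linarith [Gfun_nonneg 2 y 0]
  | succ m => rw [Gfun_succ, Gfun_zero_left, Gfun_zero_left]; linarith [Gfun_le_succ 2 y m]

lemma two_mul_Gfun_le :
    ∀ x y m, 2 * Gfun (x + 1) (y + 1) m ≤ Gfun x (y + 2) m + Gfun (x + 2) y m :=
  absorbing_walk_induction two_mul_Gfun_one_le
    (fun x m => by
      rw [Gfun_comm (x + 1), Gfun_comm x, Gfun_comm (x + 2), add_comm (Gfun _ _ _)]
      exact two_mul_Gfun_one_le x m)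
    (fun x y => by
      rw [Gfun_succ_succ_zero, Gfun_succ_succ_zero x (y + 2), Gfun_succ_succ_zero (x + 2) y]
      norm_num)
    (fun x y m h₁ h₂ => by
      linarith [Gfun_succ (x + 1) (y + 1) m, Gfun_succ x (y + 2) m, Gfun_succ (x + 2) y m])

def secantLine (g : ℕ → ℝ) (j : ℕ) (s : ℝ) : ℝ := g j + (g (j + 1) - g j) * (s - j)

noncomputable def piecewiseLinear (g : ℕ → ℝ) (s : ℝ) : ℝ := secantLine g ⌊s⌋₊ s

lemma piecewiseLinear_natCast (g : ℕ → ℝ) (k : ℕ) : piecewiseLinear g k = g k := by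
  simp [piecewiseLinear, secantLine]

lemma secantLine_succ_sub (g : ℕ → ℝ) (j : ℕ) (s : ℝ) :
    secantLine g (j + 1) s - secantLine g j s =
      (g (j + 2) - 2 * g (j + 1) + g j) * (s - (j + 1)) := by
  simp only [secantLine]
  push_cast
  ring

section SecantLine

variable {g : ℕ → ℝ} {n : ℕ} {s : ℝ}

lemma secantLine_le_secantLine_succ {k : ℕ} (hk : 2 * g (k + 1) ≤ g k + g (k + 2))
    (hs : k + 1 ≤ s) :
    secantLine g k s ≤ secantLine g (k + 1) s :=
  sub_nonneg.1 <| secantLine_succ_sub g k s ▸ mul_nonneg (by linarith) (by linarith)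

lemma secantLine_succ_le_secantLine {k : ℕ} (hk : 2 * g (k + 1) ≤ g k + g (k + 2))
    (hs : s ≤ k + 1) :
    secantLine g (k + 1) s ≤ secantLine g k s :=
  sub_nonpos.1 <| secantLine_succ_sub g k s ▸
    mul_nonpos_of_nonneg_of_nonpos (by linarith) (by linarith)

lemma secantLine_le_secantLine_of_le (hg : ∀ k, k + 2 ≤ n → 2 * g (k + 1) ≤ g k + g (k + 2))
    {i j : ℕ} (hij : i ≤ j) (hj : j < n) (hjs : j ≤ s) :
    secantLine g i s ≤ secantLine g j s := by
  induction j, hij using Nat.le_induction with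
  | base => rfl
  | succ j hij ih =>
    push_cast at hjs
    exact (ih (by omega) (by linarith)).trans (secantLine_le_secantLine_succ (hg j (by omega)) hjs)

lemma secantLine_le_secantLine_of_ge (hg : ∀ k, k + 2 ≤ n → 2 * g (k + 1) ≤ g k + g (k + 2))
    {i j : ℕ} (hji : j ≤ i) (hi : i < n) (hsj : s ≤ j + 1) :
    secantLine g i s ≤ secantLine g j s := by
  induction i, hji using Nat.le_induction with
  | base => rfl
  | succ i hji ih =>
    have hsi : s ≤ i + 1 := hsj.trans (by exact_mod_cast Nat.succ_le_succ hji)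
    exact (secantLine_succ_le_secantLine (hg i (by omega)) hsi).trans (ih (by omega))

lemma exists_piecewiseLinear_eq_secantLine (hn : 0 < n) (hs : s ∈ Set.Icc 0 (n : ℝ)) :
    ∃ j < n, j ≤ s ∧ s ≤ j + 1 ∧ piecewiseLinear g s = secantLine g j s := by
  rcases hs.2.lt_or_eq with hsn | rfl
  · exact ⟨⌊s⌋₊, (Nat.floor_lt hs.1).2 hsn, Nat.floor_le hs.1, (Nat.lt_floor_add_one s).le,
      rfl⟩
  · have hcast : ((n - 1 : ℕ) : ℝ) = n - 1 := Nat.cast_pred hn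
    refine ⟨n - 1, by omega, by rw [hcast]; linarith, by rw [hcast]; linarith, ?_⟩
    rw [piecewiseLinear_natCast, secantLine, Nat.sub_add_cancel hn, hcast]
    ring

lemma convexOn_piecewiseLinear (hg : ∀ k, k + 2 ≤ n → 2 * g (k + 1) ≤ g k + g (k + 2)) :
    ConvexOn ℝ (Set.Icc 0 (n : ℝ)) (piecewiseLinear g) := by
  refine ⟨convex_Icc _ _, fun p hp q hq a b ha hb hab => ?_⟩
  rcases Nat.eq_zero_or_pos n with rfl | hn
  · obtain rfl : p = 0 := by simpa using hp
    obtain rfl : q = 0 := by simpa using hq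
    rw [smul_zero, smul_zero, add_zero, ← add_smul, hab, one_smul]
  obtain ⟨j, hj, hjs, hsj, hr⟩ :=
    exists_piecewiseLinear_eq_secantLine hn (convex_Icc _ _ hp hq ha hb hab) (g := g)
  -- The secant line of the piece containing `a • p + b • q` supports the graph on `[0, n]`.
  have hsupport {t : ℝ} (ht : t ∈ Set.Icc 0 (n : ℝ)) :
      secantLine g j t ≤ piecewiseLinear g t := by
    obtain ⟨i, hi, his, hsi, ht⟩ := exists_piecewiseLinear_eq_secantLine hn ht (g := g)
    rw [ht]
    rcases le_total j i with hji | hij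
    · exact secantLine_le_secantLine_of_le hg hji hi his
    · exact secantLine_le_secantLine_of_ge hg hij hj hsi
  calc piecewiseLinear g (a • p + b • q) = secantLine g j (a • p + b • q) := hr
    _ = a * secantLine g j p + b * secantLine g j q := by
      simp only [secantLine, smul_eq_mul]
      linear_combination (g j - (g (j + 1) - g j) * j) * hab.symm
    _ ≤ a • piecewiseLinear g p + b • piecewiseLinear g q := by
      simp only [smul_eq_mul]
      gcongr
      exacts [hsupport hp, hsupport hq]

end SecantLine

lemma Hfun_eq_piecewiseLinear (n m : ℕ) {t : ℝ} (ht : t ∈ Set.Icc (-(n : ℝ)) n) :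
    Hfun n m t = piecewiseLinear (fun k => Gfun k (n - k) m) ((n + t) / 2) := by
  by_cases h : (n : ℝ) ≤ |t|
  · rw [Hfun, if_pos h]
    rcases (abs_eq (Nat.cast_nonneg n)).1 ((abs_le.2 ht).antisymm h) with rfl | rfl
    · rw [add_self_div_two, piecewiseLinear_natCast, Nat.sub_self, Gfun_zero_right]
    · rw [add_neg_cancel, zero_div, ← Nat.cast_zero, piecewiseLinear_natCast, Nat.sub_zero,
        Gfun_zero_left]
  · have hs : 0 ≤ ((n : ℝ) + t) / 2 := by linarith [ht.1]
    rw [Hfun, if_neg h, Int.floor_toNat, ← natCast_floor_eq_intCast_floor hs, Nat.sub_sub,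
      piecewiseLinear, secantLine]
    ring

theorem H_convexOn (n m : ℕ) :
    ConvexOn ℝ (Set.Icc (-(n : ℝ)) (n : ℝ)) (Hfun n m) := by
  have hg (k : ℕ) (hk : k + 2 ≤ n) :
      2 * Gfun (k + 1) (n - (k + 1)) m ≤ Gfun k (n - k) m + Gfun (k + 2) (n - (k + 2)) m := by
    obtain ⟨y, rfl⟩ : ∃ y, n = k + 2 + y := ⟨n - (k + 2), by omega⟩
    rw [show k + 2 + y - (k + 1) = y + 1 by omega, show k + 2 + y - k = y + 2 by omega,
      show k + 2 + y - (k + 2) = y by omega]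
    exact two_mul_Gfun_le k y m
  let φ : ℝ →ᵃ[ℝ] ℝ := AffineMap.lineMap ((n : ℝ) / 2) ((n + 1) / 2)
  have hφ (t : ℝ) : φ t = (n + t) / 2 := by
    rw [AffineMap.lineMap_apply_ring']
    ring
  have hconv := convexOn_piecewiseLinear (g := fun k => Gfun k (n - k) m) hg
  refine ((hconv.comp_affineMap φ).subset (fun t ht => ?_) (convex_Icc _ _)).congr fun t ht => ?_
  · simp only [Set.mem_preimage, hφ, Set.mem_Icc] at ht ⊢
    constructor <;> linarith [ht.1, ht.2]
  · rw [Function.comp_apply, hφ, Hfun_eq_piecewiseLinear n m ht]
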